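/- arXiv:math/0409235 — 2 statements merged into one kernel-verified Lean document; each statement's English description precedes it below -/
import Mathlib

section
/- Let n ≥ 2 and let F be a maximal laminar family of subsets of [n] with all members of cardinality at least 2. Then F is admissible — i.e., the second-smallest elements secondmin S, for S ∈ F, are pairwise distinct (equivalently, they are exactly the numbers 2, 3, …, n, each occurring once) — if and only if the edge set {{min S, secondmin S} : S ∈ F} is a spanning tree of the complete graph K_n on vertex set [n]. -/
/-- A family of subsets of `[n]` is laminar if any two members are disjoint or comparable. -/
def Laminar {n : ℕ} (F : Finset (Finset (Fin n))) : Prop :=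
  ∀ S ∈ F, ∀ T ∈ F, S ⊆ T ∨ T ⊆ S ∨ Disjoint S T

/-- A laminar family on `[n]` all of whose members have cardinality at least `2`. -/
def GoodLaminar (n : ℕ) (F : Finset (Finset (Fin n))) : Prop :=
  Laminar F ∧ ∀ S ∈ F, 2 ≤ S.card

/-- A maximal laminar family of subsets of `[n]` with all members of cardinality `≥ 2`. -/
def MaxGoodLaminar (n : ℕ) (F : Finset (Finset (Fin n))) : Prop :=
  GoodLaminar n F ∧ ∀ G : Finset (Finset (Fin n)), GoodLaminar n G → F ⊆ G → G = F

/-- `{min S, secondmin S}`: the set of the two smallest elements of `S`. -/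
def minTwo {n : ℕ} (S : Finset (Fin n)) : Finset (Fin n) :=
  ((S.sort (· ≤ ·)).take 2).toFinset

/-- The simple graph on `Fin n` associated with a set `E` of (two-element) subsets. -/
def graphOf {n : ℕ} (E : Finset (Finset (Fin n))) : SimpleGraph (Fin n) where
  Adj x y := x ≠ y ∧ ∃ e ∈ E, x ∈ e ∧ y ∈ e
  symm := ⟨fun _ _ h => ⟨h.1.symm, h.2.imp fun _ he => ⟨he.1, he.2.2, he.2.1⟩⟩⟩
  loopless := ⟨fun _ h => h.1 rfl⟩

/-- `E` is a spanning tree of the complete graph `K_n` on vertex set `Fin n`:  a set of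
`n - 1` two-element subsets forming a connected acyclic graph on all `n` vertices. -/
def IsSpanningTree (n : ℕ) (E : Finset (Finset (Fin n))) : Prop :=
  (∀ e ∈ E, e.card = 2) ∧ E.card = n - 1 ∧ (graphOf E).Connected ∧ (graphOf E).IsAcyclic

/-- The second-smallest element of `S` (as an `Option`; `some` whenever `|S| ≥ 2`). -/
def secondmin? {n : ℕ} (S : Finset (Fin n)) : Option (Fin n) :=
  ((S.sort (· ≤ ·)).drop 1).head?

/-!
A laminar family of sets of size at least two on `[n]` has at most `n - 1` members, and a maximal
one has exactly `n - 1`: sending a member `S` to the least element of `S` outside `min S` and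
all members strictly inside `S` that contain `min S` is injective on any such family, and by
maximality it hits every element but the smallest.

If `F` is admissible, `S ↦ secondmin S` is therefore a bijection onto `{2, …, n}`, so every
vertex but the smallest is joined to a smaller one: the graph is connected with at most `n - 1`
edges, hence a tree. Conversely, `n - 1` distinct edges make `S ↦ {min S, secondmin S}` injective
on `F`, and by laminarity two members with the same second-smallest element share their smallest
one as well.
-/

open Finset

variable {n : ℕ}

section MinTwo

variable [NeZero n] {S T : Finset (Fin n)} {x : Fin n}

def min₁ (S : Finset (Fin n)) : Fin n := if h : S.Nonempty then S.min' h else 0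

def min₂ (S : Finset (Fin n)) : Fin n := min₁ (S.erase (min₁ S))

lemma min₁_mem (h : S.Nonempty) : min₁ S ∈ S := by
  rw [min₁, dif_pos h]
  exact S.min'_mem h

lemma min₁_le (hx : x ∈ S) : min₁ S ≤ x := by
  rw [min₁, dif_pos ⟨x, hx⟩]
  exact S.min'_le x hx

lemma nonempty_erase_min₁ (h2 : 2 ≤ #S) : (S.erase (min₁ S)).Nonempty := by
  rw [← card_pos, card_erase_of_mem (min₁_mem (card_pos.1 (by omega)))]
  omega

lemma min₂_mem_erase (h2 : 2 ≤ #S) : min₂ S ∈ S.erase (min₁ S) :=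
  min₁_mem (nonempty_erase_min₁ h2)

lemma min₂_mem (h2 : 2 ≤ #S) : min₂ S ∈ S := mem_of_mem_erase (min₂_mem_erase h2)

lemma min₁_lt_min₂ (h2 : 2 ≤ #S) : min₁ S < min₂ S :=
  (min₁_le (min₂_mem h2)).lt_of_ne (ne_of_mem_erase (min₂_mem_erase h2)).symm

lemma min₂_le (hx : x ∈ S) (hne : x ≠ min₁ S) : min₂ S ≤ x :=
  min₁_le (mem_erase.2 ⟨hne, hx⟩)

lemma sort_eq_min₁_cons (h : S.Nonempty) :
    S.sort (· ≤ ·) = min₁ S :: (S.erase (min₁ S)).sort (· ≤ ·) := by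
  conv_lhs => rw [← insert_erase (min₁_mem h)]
  exact sort_insert _ (fun y hy => min₁_le (mem_of_mem_erase hy)) (notMem_erase _ _)

lemma secondmin?_eq_some_min₂ (h2 : 2 ≤ #S) : secondmin? S = some (min₂ S) := by
  rw [secondmin?, sort_eq_min₁_cons (card_pos.1 (by omega)), List.drop_one, List.tail_cons,
    sort_eq_min₁_cons (nonempty_erase_min₁ h2)]
  rfl

lemma minTwo_eq_pair (h2 : 2 ≤ #S) : minTwo S = {min₁ S, min₂ S} := by
  rw [minTwo, sort_eq_min₁_cons (card_pos.1 (by omega)), sort_eq_min₁_cons (nonempty_erase_min₁ h2)]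
  simp [List.take]
  rfl

lemma card_minTwo (h2 : 2 ≤ #S) : #(minTwo S) = 2 := by
  rw [minTwo_eq_pair h2, card_pair (min₁_lt_min₂ h2).ne]

lemma min₁_eq_of_subset_of_min₂_eq (hST : S ⊆ T) (h2 : 2 ≤ #S) (h : min₂ S = min₂ T) :
    min₁ S = min₁ T := by
  have hS : min₁ S ∈ T := hST (min₁_mem (card_pos.1 (by omega)))
  refine (min₁_le hS).antisymm' (not_lt.1 fun hlt => ?_)
  have := min₂_le hS hlt.ne'
  have := min₁_lt_min₂ h2
  order

end MinTwo

section Laminar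

variable {F : Finset (Finset (Fin n))} {A S T : Finset (Fin n)} {x y : Fin n}

lemma Laminar.insert (hF : Laminar F) (hA : ∀ T ∈ F, A ⊆ T ∨ T ⊆ A ∨ Disjoint A T) :
    Laminar (insert A F) := by
  intro S hS T hT
  rcases mem_insert.1 hS with rfl | hS' <;> rcases mem_insert.1 hT with rfl | hT'
  · exact Or.inl subset_rfl
  · exact hA T hT'
  · rcases hA S hS' with h | h | h
    exacts [Or.inr (Or.inl h), Or.inl h, Or.inr (Or.inr h.symm)]
  · exact hF S hS' T hT'

lemma MaxGoodLaminar.mem_of_laminar_insert (hF : MaxGoodLaminar n F) (hA : Laminar (insert A F))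
    (h2 : 2 ≤ #A) : A ∈ F := by
  have hgood : GoodLaminar n (insert A F) := ⟨hA, (forall_mem_insert _ _ _).2 ⟨h2, hF.1.2⟩⟩
  rw [← hF.2 _ hgood (subset_insert A F)]
  exact mem_insert_self A F

lemma MaxGoodLaminar.univ_mem (hn : 2 ≤ n) (hF : MaxGoodLaminar n F) : univ ∈ F :=
  hF.mem_of_laminar_insert (hF.1.1.insert fun T _ => Or.inr (Or.inl (subset_univ T)))
    (by simpa using hn)

/-- For laminar `F`, this is `{x}` or the largest member of `F` strictly inside `S` that contains
`x`. -/
def block (F : Finset (Finset (Fin n))) (S : Finset (Fin n)) (x : Fin n) : Finset (Fin n) :=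
  Insert.insert x ((F.filter fun T => T ⊂ S ∧ x ∈ T).biUnion id)

lemma mem_block : y ∈ block F S x ↔ y = x ∨ ∃ T ∈ F, T ⊂ S ∧ x ∈ T ∧ y ∈ T := by
  simp [block, and_assoc]

lemma mem_block_self : x ∈ block F S x := mem_block.2 (Or.inl rfl)

lemma block_subset (hx : x ∈ S) : block F S x ⊆ S := by
  intro y hy
  obtain rfl | ⟨T, -, hTS, -, hyT⟩ := mem_block.1 hy
  exacts [hx, hTS.1 hyT]

lemma subset_block (hT : T ∈ F) (hTS : T ⊂ S) (hx : x ∈ T) : T ⊆ block F S x :=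
  fun _ hy => mem_block.2 (Or.inr ⟨T, hT, hTS, hx, hy⟩)

lemma Laminar.subset_block_of_not_disjoint (hF : Laminar F) (hT : T ∈ F) (hTS : T ⊂ S)
    (hd : ¬Disjoint T (block F S x)) : T ⊆ block F S x := by
  obtain ⟨y, hyT, hy⟩ := not_disjoint_iff.1 hd
  obtain rfl | ⟨U, hU, hUS, hxU, hyU⟩ := mem_block.1 hy
  · exact subset_block hT hTS hyT
  rcases hF T hT U hU with h | h | h
  · exact h.trans (subset_block hU hUS hxU)
  · exact subset_block hT hTS (h hxU)
  · exact absurd hyU (disjoint_left.1 h hyT)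

lemma Laminar.block_ssubset (hF : Laminar F) (hx : x ∈ S) (h2 : 2 ≤ #S) :
    block F S x ⊂ S := by
  rcases (F.filter fun T => T ⊂ S ∧ x ∈ T).eq_empty_or_nonempty with hP | hP
  · rw [block, hP, biUnion_empty, insert_empty]
    refine ssubset_of_subset_of_ne (singleton_subset_iff.2 hx) fun h => ?_
    rw [← h, card_singleton] at h2
    omega
  obtain ⟨C, hC, hCmax⟩ := exists_max_image _ card hP
  obtain ⟨hCF, hCS, hxC⟩ := (mem_filter.1 hC).imp_right id
  have hblock : block F S x ⊆ C := by
    intro y hy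
    obtain rfl | ⟨U, hU, hUS, hxU, hyU⟩ := mem_block.1 hy
    · exact hxC
    rcases hF U hU C hCF with h | h | h
    · exact h hyU
    · rwa [eq_of_subset_of_card_le h (hCmax U (mem_filter.2 ⟨hU, hUS, hxU⟩))]
    · exact absurd hxC (disjoint_left.1 h hxU)
  exact hblock.trans_ssubset hCS

lemma Laminar.insert_block_union (hF : Laminar F) (hS : S ∈ F) (hx : x ∈ S)
    (hy : y ∈ S) : Laminar (Insert.insert (block F S x ∪ block F S y) F) := by
  have hAS : block F S x ∪ block F S y ⊆ S := union_subset (block_subset hx) (block_subset hy)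
  refine hF.insert fun T hT => ?_
  rcases hF S hS T hT with h | h | h
  · exact Or.inl (hAS.trans h)
  · obtain rfl | hTS := h.eq_or_ssubset
    · exact Or.inl hAS
    by_cases hdx : Disjoint T (block F S x)
    · by_cases hdy : Disjoint T (block F S y)
      · exact Or.inr (Or.inr (disjoint_union_left.2 ⟨hdx.symm, hdy.symm⟩))
      · exact Or.inr (Or.inl ((hF.subset_block_of_not_disjoint hT hTS hdy).trans
          subset_union_right))
    · exact Or.inr (Or.inl ((hF.subset_block_of_not_disjoint hT hTS hdx).trans
        subset_union_left))
  · exact Or.inr (Or.inr (disjoint_of_subset_left hAS h))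

end Laminar

section Pivot

variable [NeZero n] {F : Finset (Finset (Fin n))} {S T : Finset (Fin n)} {v x : Fin n}

/-- When `F` is maximal, `S ∈ F` is the disjoint union of two blocks, and `pivot F S` is the least
element of the one not containing `min₁ S`. -/
def pivot (F : Finset (Finset (Fin n))) (S : Finset (Fin n)) : Fin n :=
  min₁ (S \ block F S (min₁ S))

lemma Laminar.pivot_mem_sdiff (hF : Laminar F) (h2 : 2 ≤ #S) :
    pivot F S ∈ S \ block F S (min₁ S) :=
  min₁_mem (sdiff_nonempty.2 (hF.block_ssubset (min₁_mem (card_pos.1 (by omega))) h2).not_subset)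

lemma pivot_le (hx : x ∈ S \ block F S (min₁ S)) : pivot F S ≤ x := min₁_le hx

lemma Laminar.min₁_lt_pivot (hF : Laminar F) (h2 : 2 ≤ #S) : min₁ S < pivot F S := by
  obtain ⟨hS, hblock⟩ := mem_sdiff.1 (hF.pivot_mem_sdiff h2)
  exact (min₁_le hS).lt_of_ne fun h => hblock (h ▸ mem_block_self)

lemma Laminar.pivot_ne_of_ssubset (hF : Laminar F) (hS : S ∈ F) (hST : S ⊂ T) (h2S : 2 ≤ #S)
    (h2T : 2 ≤ #T) : pivot F S ≠ pivot F T := by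
  intro heq
  have hvS := mem_sdiff.1 (hF.pivot_mem_sdiff h2S)
  have hvT : pivot F S ∉ block F T (min₁ T) := heq ▸ (mem_sdiff.1 (hF.pivot_mem_sdiff h2T)).2
  -- `S` lies inside the block of `min₁ T` or misses it, and the pivot of `S` rules out the first
  have hdisj : Disjoint S (block F T (min₁ T)) := by
    by_contra hd
    exact hvT (hF.subset_block_of_not_disjoint hS hST hd hvS.1)
  have hmin : min₁ S ∈ S := min₁_mem (card_pos.1 (by omega))
  have := pivot_le (mem_sdiff.2 ⟨hST.1 hmin, disjoint_left.1 hdisj hmin⟩)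
  have := hF.min₁_lt_pivot h2S
  order

lemma Laminar.pivot_injOn (hF : Laminar F) (h2 : ∀ S ∈ F, 2 ≤ #S) : Set.InjOn (pivot F) F := by
  intro S hS T hT heq
  by_contra hne
  have hvS := (mem_sdiff.1 (hF.pivot_mem_sdiff (h2 S hS))).1
  have hvT := (mem_sdiff.1 (hF.pivot_mem_sdiff (h2 T hT))).1
  rcases hF S hS T hT with h | h | h
  · exact hF.pivot_ne_of_ssubset hS (h.ssubset_of_ne hne) (h2 S hS) (h2 T hT) heq
  · exact hF.pivot_ne_of_ssubset hT (h.ssubset_of_ne (Ne.symm hne)) (h2 T hT) (h2 S hS) heq.symm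
  · exact disjoint_left.1 h hvS (heq ▸ hvT)

lemma notMem_block_of_minimal (hmin : ∀ T ∈ F, T ⊂ S → v ∈ T → min₁ T = v) (hxv : x < v) :
    v ∉ block F S x := by
  intro hv
  obtain rfl | ⟨T, hT, hTS, hxT, hvT⟩ := mem_block.1 hv
  · exact hxv.false
  · exact (hmin T hT hTS hvT ▸ min₁_le hxT).not_gt hxv

lemma MaxGoodLaminar.pivot_eq_of_minimal (hF : MaxGoodLaminar n F) (hS : S ∈ F) (hvS : v ∈ S)
    (hlt : min₁ S < v) (hmin : ∀ T ∈ F, T ⊂ S → v ∈ T → min₁ T = v) : pivot F S = v := by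
  obtain ⟨hlam, h2⟩ := hF.1
  have hx := mem_sdiff.1 (hlam.pivot_mem_sdiff (h2 S hS))
  refine (pivot_le (mem_sdiff.2 ⟨hvS, notMem_block_of_minimal hmin hlt⟩)).antisymm ?_
  by_contra! hxv
  -- then the blocks of `min₁ S` and `pivot F S` together form a new member of `F`, avoiding `v`
  set A := block F S (min₁ S) ∪ block F S (pivot F S)
  have hmA : min₁ S ∈ A := mem_union_left _ mem_block_self
  have hxA : pivot F S ∈ A := mem_union_right _ mem_block_self
  have hA2 : 2 ≤ #A := by
    rw [← card_pair (hlam.min₁_lt_pivot (h2 S hS)).ne]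
    exact card_le_card (insert_subset hmA (singleton_subset_iff.2 hxA))
  have hAF : A ∈ F := hF.mem_of_laminar_insert
    (hlam.insert_block_union hS (min₁_mem ⟨v, hvS⟩) hx.1) hA2
  have hAS : A ⊂ S := by
    refine ssubset_iff_of_subset (union_subset (block_subset (min₁_mem ⟨v, hvS⟩))
      (block_subset hx.1)) |>.2 ⟨v, hvS, ?_⟩
    rw [mem_union, not_or]
    exact ⟨notMem_block_of_minimal hmin hlt, notMem_block_of_minimal hmin hxv⟩
  exact hx.2 (subset_block hAF hAS hmA hxA)

lemma MaxGoodLaminar.exists_pivot_eq (hn : 2 ≤ n) (hF : MaxGoodLaminar n F) (hv : v ≠ 0) :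
    ∃ S ∈ F, pivot F S = v := by
  have huniv : univ ∈ F.filter fun T => v ∈ T ∧ min₁ T < v :=
    mem_filter.2 ⟨hF.univ_mem hn, mem_univ v,
      (min₁_le (mem_univ 0)).trans_lt (Fin.pos_iff_ne_zero.2 hv)⟩
  obtain ⟨S, hS, hSmin⟩ := exists_min_image _ card ⟨_, huniv⟩
  obtain ⟨hSF, hvS, hlt⟩ := mem_filter.1 hS
  refine ⟨S, hSF, hF.pivot_eq_of_minimal hSF hvS hlt fun T hT hTS hvT => ?_⟩
  by_contra hne
  have := hSmin T (mem_filter.2 ⟨hT, hvT, (min₁_le hvT).lt_of_ne hne⟩)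
  exact (card_lt_card hTS).not_ge this

lemma MaxGoodLaminar.card_eq (hn : 2 ≤ n) (hF : MaxGoodLaminar n F) : #F = n - 1 := by
  obtain ⟨hlam, h2⟩ := hF.1
  have := card_nbij (t := univ.erase (0 : Fin n)) (pivot F)
    (fun S hS => mem_erase.2 ⟨(hlam.min₁_lt_pivot (h2 S hS)).ne_bot, mem_univ _⟩)
    (hlam.pivot_injOn h2) (fun v hv => hF.exists_pivot_eq hn (mem_erase.1 hv).1)
  simpa using this

end Pivot

lemma SimpleGraph.connected_of_forall_exists_lt_adj {V : Type*} [Preorder V] [WellFoundedLT V]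
    {G : SimpleGraph V} (a : V) (h : ∀ v ≠ a, ∃ u < v, G.Adj u v) : G.Connected := by
  refine (G.connected_iff_exists_forall_reachable).2 ⟨a, fun v => ?_⟩
  induction v using WellFoundedLT.induction with
  | _ v ih =>
    by_cases hv : v = a
    · exact hv ▸ SimpleGraph.Reachable.refl v
    obtain ⟨u, hu, hadj⟩ := h v hv
    exact (ih u hu).trans hadj.reachable

lemma card_edgeSet_graphOf_le {E : Finset (Finset (Fin n))} (hE : ∀ e ∈ E, #e ≤ 2) :
    Nat.card (graphOf E).edgeSet ≤ #E := by
  rw [Nat.card_coe_set_eq, ← Set.ncard_coe_finset E]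
  refine Set.ncard_le_ncard_of_injOn Sym2.toFinset ?_
    fun z _ w _ h => Sym2.ext fun a => by rw [← Sym2.mem_toFinset, h, Sym2.mem_toFinset]
  rintro ⟨x, y⟩ ⟨hxy, e, he, hx, hy⟩
  have hpair : {x, y} ⊆ e := insert_subset hx (singleton_subset_iff.2 hy)
  rwa [Sym2.toFinset_mk_eq, mem_coe,
    eq_of_subset_of_card_le hpair ((hE e he).trans (card_pair hxy).ge)]

section Admissible

variable [NeZero n] {F : Finset (Finset (Fin n))}

lemma admissible_iff_injOn_min₂ (h2 : ∀ S ∈ F, 2 ≤ #S) :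
    (∀ S ∈ F, ∀ T ∈ F, secondmin? S = secondmin? T → S = T) ↔
      Set.InjOn min₂ (F : Set (Finset (Fin n))) := by
  refine forall₂_congr fun S hS => forall₂_congr fun T hT => ?_
  rw [secondmin?_eq_some_min₂ (h2 S hS), secondmin?_eq_some_min₂ (h2 T hT), Option.some_inj]

lemma MaxGoodLaminar.isSpanningTree_of_injOn_min₂ (hn : 2 ≤ n) (hF : MaxGoodLaminar n F)
    (h : Set.InjOn min₂ (F : Set (Finset (Fin n)))) : IsSpanningTree n (F.image minTwo) := by
  have h2 := hF.1.2
  have hcard := hF.card_eq hn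
  have hE2 : ∀ e ∈ F.image minTwo, #e = 2 := by
    simpa using fun S hS => card_minTwo (h2 S hS)
  have hsurj :
      Set.SurjOn min₂ (F : Set (Finset (Fin n))) (univ.erase (0 : Fin n) : Set (Fin n)) :=
    surjOn_of_injOn_of_card_le min₂
      (fun S hS => mem_erase.2 ⟨(min₁_lt_min₂ (h2 S hS)).ne_bot, mem_univ _⟩) h
      (by simp [hcard])
  have hconn : (graphOf (F.image minTwo)).Connected := by
    refine SimpleGraph.connected_of_forall_exists_lt_adj 0 fun v hv => ?_
    obtain ⟨S, hS, rfl⟩ := hsurj (mem_erase.2 ⟨hv, mem_univ v⟩)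
    refine ⟨min₁ S, min₁_lt_min₂ (h2 S hS), (min₁_lt_min₂ (h2 S hS)).ne, minTwo S,
      mem_image_of_mem _ hS, ?_⟩
    simp [minTwo_eq_pair (h2 S hS)]
  -- `n ≤ #edges + 1 ≤ #(F.image minTwo) + 1 ≤ #F + 1 = n` forces equality throughout
  have hV := hconn.card_vert_le_card_edgeSet_add_one
  have hedges := card_edgeSet_graphOf_le fun e he => (hE2 e he).le
  have himage := card_image_le (s := F) (f := minTwo)
  rw [Nat.card_fin] at hV
  refine ⟨hE2, by omega, hconn,
    (SimpleGraph.isTree_iff_connected_and_card.2 ⟨hconn, by rw [Nat.card_fin]; omega⟩).isAcyclic⟩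

lemma Laminar.injOn_min₂_of_injOn_minTwo (hF : Laminar F) (h2 : ∀ S ∈ F, 2 ≤ #S)
    (h : Set.InjOn minTwo (F : Set (Finset (Fin n)))) :
    Set.InjOn min₂ (F : Set (Finset (Fin n))) := by
  have hsub : ∀ S ∈ F, ∀ T ∈ F, S ⊆ T → min₂ S = min₂ T → S = T := fun S hS T hT hST heq =>
    h hS hT (by rw [minTwo_eq_pair (h2 S hS), minTwo_eq_pair (h2 T hT), heq,
      min₁_eq_of_subset_of_min₂_eq hST (h2 S hS) heq])
  intro S hS T hT heq
  rcases hF S hS T hT with hST | hTS | hd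
  · exact hsub S hS T hT hST heq
  · exact (hsub T hT S hS hTS heq.symm).symm
  · exact (disjoint_left.1 hd (min₂_mem (h2 S hS)) (heq ▸ min₂_mem (h2 T hT))).elim

end Admissible

/-- Let `n ≥ 2` and let `F` be a maximal laminar family of subsets of `[n]` with all members
of cardinality `≥ 2`.  Then `F` is admissible (the second-smallest elements of the members of
`F` are pairwise distinct) if and only if `{{min S, secondmin S} : S ∈ F}` is a spanning tree
of the complete graph `K_n`. -/
theorem admissible_iff_spanningTree (n : ℕ) (hn : 2 ≤ n)
    (F : Finset (Finset (Fin n))) (hF : MaxGoodLaminar n F) :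
    (∀ S ∈ F, ∀ T ∈ F, secondmin? S = secondmin? T → S = T) ↔
    IsSpanningTree n (F.image minTwo) := by
  have : NeZero n := ⟨by omega⟩
  rw [admissible_iff_injOn_min₂ hF.1.2]
  refine ⟨hF.isSpanningTree_of_injOn_min₂ hn, fun hT => ?_⟩
  refine hF.1.1.injOn_min₂_of_injOn_minTwo hF.1.2 (injOn_of_card_image_eq ?_)
  rw [hT.2.1, hF.card_eq hn]
end

section
/- Let n > k ≥ 2 and let F be a finite family of subsets of [n], each of cardinality at least k. Then F is a laminar family (any two members are disjoint or one contains the other) if and only if for every subfamily A ⊆ F with |A| ≥ 2 whose members are pairwise incomparable under inclusion, the join ⋁_{S∈A} π_S in the partition lattice has at least two non-singleton blocks, i.e., is not of the form π_T for any subset T of [n]. (This says: F is nested with respect to the minimal building set of the k-equal lattice Π_{n,k} if and only if F is laminar; the irreducible elements of Π_{n,k} are exactly the partitions with one non-singleton block, of size at least k.) -/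
/-- The partition of `Fin n` whose unique (potentially) non-singleton block is `S`. -/
def piS (n : ℕ) (S : Set (Fin n)) : Setoid (Fin n) where
  r x y := x = y ∨ (x ∈ S ∧ y ∈ S)
  iseqv := by
    constructor
    · intro x; exact Or.inl rfl
    · rintro x y (rfl | ⟨hx, hy⟩)
      · exact Or.inl rfl
      · exact Or.inr ⟨hy, hx⟩
    · rintro x y z (rfl | ⟨hx, hy⟩) (rfl | ⟨hy', hz⟩)
      · exact Or.inl rfl
      · exact Or.inr ⟨hy', hz⟩
      · exact Or.inr ⟨hx, hy⟩
      · exact Or.inr ⟨hx, hz⟩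


def lamSetoid (n : ℕ) (A : Finset (Finset (Fin n)))
    (hdisj : ∀ S ∈ A, ∀ S' ∈ A, S ≠ S' → Disjoint S S') : Setoid (Fin n) where
  r x y := x = y ∨ ∃ S ∈ A, x ∈ S ∧ y ∈ S
  iseqv := by
    constructor
    · intro x; exact Or.inl rfl
    · rintro x y (rfl | ⟨S, hS, hx, hy⟩)
      · exact Or.inl rfl
      · exact Or.inr ⟨S, hS, hy, hx⟩
    · rintro x y z (rfl | ⟨S, hS, hx, hy⟩) h
      · exact h
      · rcases h with rfl | ⟨S', hS', hy', hz⟩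
        · exact Or.inr ⟨S, hS, hx, hy⟩
        · have hSS : S = S' := by
            by_contra hne
            exact (Finset.disjoint_left.mp (hdisj S hS S' hS' hne) hy) hy'
          subst hSS
          exact Or.inr ⟨S, hS, hx, hz⟩

lemma piS_rel (n : ℕ) (S : Set (Fin n)) (x y : Fin n) :
    (piS n S) x y ↔ x = y ∨ (x ∈ S ∧ y ∈ S) := Iff.rfl

/-- Let `n > k ≥ 2` and let `F` be a finite family of subsets of `[n]`, each of cardinality
at least `k`.  Then `F` is laminar (any two members are disjoint or one contains the other)
if and only if for every subfamily `A ⊆ F` with `|A| ≥ 2` whose members are pairwise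
incomparable under inclusion, the join of the partitions `π_S`, `S ∈ A`, in the partition
lattice is not of the form `π_T` for any `T ⊆ [n]`; i.e. `F` is nested with respect to the
minimal building set of the `k`-equal lattice `Π_{n,k}`. -/
theorem laminar_iff_nested_kEqual (n k : ℕ) (hk : 2 ≤ k) (hn : k < n)
    (F : Finset (Finset (Fin n))) (hF : ∀ S ∈ F, k ≤ S.card) :
    (∀ S ∈ F, ∀ T ∈ F, S ⊆ T ∨ T ⊆ S ∨ Disjoint S T) ↔
    (∀ A ⊆ F, 2 ≤ A.card → (∀ S ∈ A, ∀ T ∈ A, S ≠ T → ¬ S ⊆ T) →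
      ∀ T : Set (Fin n), A.sup (fun S => piS n ↑S) ≠ piS n T) := by
  constructor
  · -- laminar → nested
    intro hlam A hA hcard hinc T hsup
    have hdisj : ∀ S ∈ A, ∀ S' ∈ A, S ≠ S' → Disjoint S S' := by
      intro S hS S' hS' hne
      rcases hlam S (hA hS) S' (hA hS') with h | h | h
      · exact absurd h (hinc S hS S' hS' hne)
      · exact absurd h (hinc S' hS' S hS hne.symm)
      · exact h
    have hle : A.sup (fun S => piS n ↑S) ≤ lamSetoid n A hdisj := by
      refine Finset.sup_le fun S hS => Setoid.le_def.mpr ?_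
      rintro x y (rfl | ⟨hx, hy⟩)
      · exact Or.inl rfl
      · exact Or.inr ⟨S, hS, hx, hy⟩
    obtain ⟨S₁, hS₁, S₂, hS₂, hne⟩ := Finset.one_lt_card.mp hcard
    obtain ⟨x, hx, x', hx', hxx'⟩ :=
      Finset.one_lt_card.mp (lt_of_lt_of_le one_lt_two (hk.trans (hF S₁ (hA hS₁))))
    obtain ⟨y, hy, y', hy', hyy'⟩ :=
      Finset.one_lt_card.mp (lt_of_lt_of_le one_lt_two (hk.trans (hF S₂ (hA hS₂))))
    have hsup1 : piS n ↑S₁ ≤ A.sup (fun S => piS n ↑S) := Finset.le_sup (f := fun S : Finset (Fin n) => piS n (↑S : Set (Fin n))) hS₁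
    have hsup2 : piS n ↑S₂ ≤ A.sup (fun S => piS n ↑S) := Finset.le_sup (f := fun S : Finset (Fin n) => piS n (↑S : Set (Fin n))) hS₂
    have hxT : x ∈ T := by
      have h1 : (A.sup (fun S => piS n ↑S)) x x' :=
        Setoid.le_def.mp hsup1 (Or.inr ⟨hx, hx'⟩)
      rw [hsup] at h1
      rcases h1 with h1 | h1
      · exact absurd h1 hxx'
      · exact h1.1
    have hyT : y ∈ T := by
      have h1 : (A.sup (fun S => piS n ↑S)) y y' :=
        Setoid.le_def.mp hsup2 (Or.inr ⟨hy, hy'⟩)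
      rw [hsup] at h1
      rcases h1 with h1 | h1
      · exact absurd h1 hyy'
      · exact h1.1
    have hxy : (A.sup (fun S => piS n ↑S)) x y := by
      rw [hsup]; exact Or.inr ⟨hxT, hyT⟩
    have hm : (lamSetoid n A hdisj) x y := Setoid.le_def.mp hle hxy
    have hxney : x ≠ y := fun h =>
      Finset.disjoint_left.mp (hdisj S₁ hS₁ S₂ hS₂ hne) hx (h ▸ hy)
    rcases hm with h | ⟨S, hS, hxS, hyS⟩
    · exact hxney h
    · have e1 : S = S₁ := by
        by_contra hne1
        exact Finset.disjoint_left.mp (hdisj S hS S₁ hS₁ hne1) hxS hx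
      have e2 : S = S₂ := by
        by_contra hne2
        exact Finset.disjoint_left.mp (hdisj S hS S₂ hS₂ hne2) hyS hy
      exact hne (e1 ▸ e2)
  · -- nested → laminar
    intro hnest S hS T hT
    by_contra hcon
    push_neg at hcon
    obtain ⟨hST, hTS, hnd⟩ := hcon
    have hne : S ≠ T := fun h => hST (h ▸ Finset.Subset.refl S)
    obtain ⟨z, hzS, hzT⟩ := Finset.not_disjoint_iff.mp hnd
    set A : Finset (Finset (Fin n)) := {S, T} with hA
    have hsub : A ⊆ F := by
      intro X hX
      rcases Finset.mem_insert.mp hX with rfl | hX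
      · exact hS
      · exact (Finset.mem_singleton.mp hX) ▸ hT
    have hcard : 2 ≤ A.card := by
      rw [hA, Finset.card_insert_of_notMem (by simp [hne]), Finset.card_singleton]
    have hinc : ∀ X ∈ A, ∀ Y ∈ A, X ≠ Y → ¬ X ⊆ Y := by
      intro X hXA Y hYA hXY
      have hX' : X = S ∨ X = T := by rw [hA] at hXA; simpa using hXA
      have hY' : Y = S ∨ Y = T := by rw [hA] at hYA; simpa using hYA
      rcases hX' with rfl | rfl <;> rcases hY' with rfl | rfl
      · exact absurd rfl hXY
      · exact hST
      · exact hTS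
      · exact absurd rfl hXY
    refine hnest A hsub hcard hinc (↑S ∪ ↑T) ?_
    have hAsup : A.sup (fun X => piS n ↑X) = piS n ↑S ⊔ piS n ↑T := by
      rw [hA, Finset.sup_insert, Finset.sup_singleton]
    rw [hAsup]
    apply le_antisymm
    · refine sup_le (Setoid.le_def.mpr ?_) (Setoid.le_def.mpr ?_)
      · rintro x y (rfl | ⟨hx, hy⟩)
        · exact Or.inl rfl
        · exact Or.inr ⟨Or.inl hx, Or.inl hy⟩
      · rintro x y (rfl | ⟨hx, hy⟩)
        · exact Or.inl rfl
        · exact Or.inr ⟨Or.inr hx, Or.inr hy⟩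
    · refine Setoid.le_def.mpr ?_
      rintro x y (rfl | ⟨hx, hy⟩)
      · exact (piS n ↑S ⊔ piS n ↑T).refl x
      have step : ∀ w : Fin n, w ∈ (↑S ∪ ↑T : Set (Fin n)) →
          (piS n ↑S ⊔ piS n ↑T) w z := by
        rintro w (hw | hw)
        · exact Setoid.le_def.mp le_sup_left (Or.inr ⟨hw, hzS⟩)
        · exact Setoid.le_def.mp le_sup_right (Or.inr ⟨hw, hzT⟩)
      exact (piS n ↑S ⊔ piS n ↑T).trans (step x hx)
        ((piS n ↑S ⊔ piS n ↑T).symm (step y hy))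
end
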